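/- For every k ≥ 1: Tot_{1,k} ⇛_{2,k} Gap_{1,k}. -/
import Mathlib


open FirstOrder Language

namespace Paper

variable {L : FirstOrder.Language} {α : Type*}

/-! ### Prefix classes `Σ_{n,k}` and `Π_{n,k}` -/

/-- Prepend a block of `j` existential quantifiers to a bounded formula. -/
def exN : ∀ (j : ℕ) {m : ℕ}, L.BoundedFormula α (m + j) → L.BoundedFormula α m
  | 0, _, φ => φ
  | j + 1, _, φ => exN j φ.ex

/-- Prepend a block of `j` universal quantifiers to a bounded formula. -/
def allN : ∀ (j : ℕ) {m : ℕ}, L.BoundedFormula α (m + j) → L.BoundedFormula α m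
  | 0, _, φ => φ
  | j + 1, _, φ => allN j φ.all

/-- `IsSigmaPi k b n m φ` says that the formula `φ` is in prenex form with at most `n`
alternating blocks of at most `k` quantifiers, starting with an existential block when
`b = true` (the class `Σ_{n,k}`) and with a universal block when `b = false` (`Π_{n,k}`). -/
def IsSigmaPi (k : ℕ) : Bool → ℕ → ∀ m : ℕ, L.BoundedFormula α m → Prop
  | _, 0, _, φ => φ.IsQF
  | b, n + 1, m, φ =>
      IsSigmaPi k (!b) n m φ ∨
        ∃ j : ℕ, j ≤ k ∧ ∃ ψ : L.BoundedFormula α (m + j),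
          IsSigmaPi k (!b) n (m + j) ψ ∧ φ = if b then exN j ψ else allN j ψ

/-- `φ` is a `Σ_{n,k}` formula. -/
abbrev IsSigma (n k : ℕ) {m : ℕ} (φ : L.BoundedFormula α m) : Prop :=
  IsSigmaPi k true n m φ

/-- `φ` is a `Π_{n,k}` formula. -/
abbrev IsPi (n k : ℕ) {m : ℕ} (φ : L.BoundedFormula α m) : Prop :=
  IsSigmaPi k false n m φ

/-! ### The relations `⇛_{n,k}` and `≡_{n,k}` -/

/-- `A ⇛_{n,k} B` : every `Σ_{n,k}` sentence true in `A` is true in `B`. -/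
def SigImp (L : FirstOrder.Language) (n k : ℕ) (A : Type*) (B : Type*)
    [L.Structure A] [L.Structure B] : Prop :=
  ∀ φ : L.Sentence, IsSigma n k φ → A ⊨ φ → B ⊨ φ

/-- `A ≡_{n,k} B`. -/
def SigEquiv (L : FirstOrder.Language) (n k : ℕ) (A : Type*) (B : Type*)
    [L.Structure A] [L.Structure B] : Prop :=
  SigImp L n k A B ∧ SigImp L n k B A

/-- `(A, ā) ⇛_{n,k} (B, b̄)` : every `Σ_{n,k}` formula satisfied by `ā` in `A` is satisfied
by `b̄` in `B`. -/
def SigImpT (L : FirstOrder.Language) (n k : ℕ) {l : ℕ} (A : Type*) [L.Structure A]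
    (a : Fin l → A) (B : Type*) [L.Structure B] (b : Fin l → B) : Prop :=
  ∀ φ : L.Formula (Fin l), IsSigma n k φ → φ.Realize a → φ.Realize b

/-! ### Quantifier rank -/

/-- The quantifier rank of a formula. -/
def qrank : ∀ {m : ℕ}, L.BoundedFormula α m → ℕ
  | _, BoundedFormula.falsum => 0
  | _, BoundedFormula.equal _ _ => 0
  | _, BoundedFormula.rel _ _ => 0
  | _, BoundedFormula.imp f g => max (qrank f) (qrank g)
  | _, BoundedFormula.all f => qrank f + 1

/-- `A ≡_m B` : `A` and `B` satisfy the same sentences of quantifier rank at most `m`. -/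
def RankEquiv (L : FirstOrder.Language) (m : ℕ) (A : Type*) (B : Type*)
    [L.Structure A] [L.Structure B] : Prop :=
  ∀ φ : L.Sentence, qrank φ ≤ m → (A ⊨ φ ↔ B ⊨ φ)

/-! ### Ordered structures -/

/-- The interpretation of a distinguished binary relation symbol. -/
def rle (le : L.Relations 2) {A : Type*} [L.Structure A] (x y : A) : Prop :=
  Structure.RelMap le ![x, y]

/-- The distinguished binary relation symbol `le` is interpreted as a linear order. -/
def IsOrderedLe (le : L.Relations 2) (A : Type*) [L.Structure A] : Prop :=
  (∀ x : A, rle le x x) ∧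
    (∀ x y : A, rle le x y → rle le y x → x = y) ∧
    (∀ x y z : A, rle le x y → rle le y z → rle le x z) ∧
    (∀ x y : A, rle le x y ∨ rle le y x)

/-- `x` is the minimum element w.r.t. the interpretation of `le`. -/
def IsMinimal (le : L.Relations 2) {A : Type*} [L.Structure A] (x : A) : Prop :=
  ∀ y, rle le x y

/-- `x` is the maximum element w.r.t. the interpretation of `le`. -/
def IsMaximal (le : L.Relations 2) {A : Type*} [L.Structure A] (x : A) : Prop :=
  ∀ y, rle le y x

/-- The function `ρ`: `ρ(1,k) = 2k+2` and `ρ(n+1,k) = (k+2)(ρ(n,k)+1)`. -/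
def rho : ℕ → ℕ → ℕ
  | 0, _ => 0
  | 1, k => 2 * k + 2
  | n + 2, k => (k + 2) * (rho (n + 1) k + 1)

/-! ### Starred structures:  `A*` is `A` with constants for its min and max elements.
Satisfaction of (prefix-class) sentences of the enlarged vocabulary in `A*` corresponds to
satisfaction of (prefix-class) formulas in two extra free variables, instantiated to the
minimum and the maximum. -/

/-- `A* ⇛_{n,k} B*`. -/
def SigImpStar (L : FirstOrder.Language) (n k : ℕ) (A : Type*) [L.Structure A]
    (mnA mxA : A) (B : Type*) [L.Structure B] (mnB mxB : B) : Prop :=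
  SigImpT L n k A ![mnA, mxA] B ![mnB, mxB]

/-- The tuple `ā` extended by the two distinguished constants. -/
def starT {A : Type*} {l : ℕ} (a : Fin l → A) (mn mx : A) : Fin (l + 2) → A :=
  Fin.append a ![mn, mx]

/-- `(A, ā)* ⇛_{n,k} (B, b̄)*`. -/
def SigImpTStar (L : FirstOrder.Language) (n k : ℕ) {l : ℕ} (A : Type*) [L.Structure A]
    (a : Fin l → A) (mnA mxA : A) (B : Type*) [L.Structure B] (b : Fin l → B)
    (mnB mxB : B) : Prop :=
  SigImpT L n k A (starT a mnA mxA) B (starT b mnB mxB)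

/-! ### Ordered sums -/

/-- `C`, together with the inclusion maps `f : A → C` and `g : B → C`, is the ordered sum
`A ⊕ B`: the maximum of `A` is identified with the minimum of `B`, the order places `A`
below `B`, and every other relation symbol is interpreted by the union of its
interpretations. -/
structure IsOrderedSum2 (L : FirstOrder.Language) (le : L.Relations 2)
    (A B C : Type*) [L.Structure A] [L.Structure B] [L.Structure C]
    (mxA : A) (mnB : B) (f : A → C) (g : B → C) : Prop where
  injf : Function.Injective f
  injg : Function.Injective g
  cover : ∀ c : C, (∃ a, f a = c) ∨ (∃ b, g b = c)
  glue : f mxA = g mnB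
  overlap : ∀ a b, f a = g b → a = mxA ∧ b = mnB
  le_iff : ∀ c c' : C, rle le c c' ↔
      ((∃ a a', f a = c ∧ f a' = c' ∧ rle le a a') ∨
       (∃ b b', g b = c ∧ g b' = c' ∧ rle le b b') ∨
       (∃ a b, f a = c ∧ g b = c'))
  rel_iff : ∀ (m : ℕ) (r : L.Relations m) (v : Fin m → C), ¬(m = 2 ∧ HEq r le) →
      (Structure.RelMap r v ↔
        (∃ w : Fin m → A, (∀ p, f (w p) = v p) ∧ Structure.RelMap r w) ∨
        (∃ w : Fin m → B, (∀ p, g (w p) = v p) ∧ Structure.RelMap r w))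

/-- `C`, together with the inclusion maps `f i : M i → C`, is the iterated ordered sum
`⊕_{i} M i` (where `mn i`/`mx i` are the minimum/maximum of `M i`). -/
structure IsOrderedSumSeq (L : FirstOrder.Language) (le : L.Relations 2) (s : ℕ)
    (M : Fin s → Type*) [∀ i, L.Structure (M i)] (mn mx : ∀ i, M i)
    (C : Type*) [L.Structure C] (f : ∀ i, M i → C) : Prop where
  inj : ∀ i, Function.Injective (f i)
  cover : ∀ c : C, ∃ i a, f i a = c
  glue : ∀ (i : Fin s) (h : i.1 + 1 < s), f i (mx i) = f ⟨i.1 + 1, h⟩ (mn ⟨i.1 + 1, h⟩)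
  overlap : ∀ (i j : Fin s) (a : M i) (b : M j), i < j → f i a = f j b →
      j.1 = i.1 + 1 ∧ a = mx i ∧ b = mn j
  le_iff : ∀ c c' : C, rle le c c' ↔
      ((∃ i a b, f i a = c ∧ f i b = c' ∧ rle le a b) ∨
       (∃ i j a b, i < j ∧ f i a = c ∧ f j b = c'))
  rel_iff : ∀ (m : ℕ) (r : L.Relations m) (v : Fin m → C), ¬(m = 2 ∧ HEq r le) →
      (Structure.RelMap r v ↔
        ∃ i, ∃ w : Fin m → M i, (∀ p, f i (w p) = v p) ∧ Structure.RelMap r w)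

/-! ### The (n,k)-prefix Ehrenfeucht–Fraïssé game -/

/-- The history of the play before round `i`. -/
def histOf {A B : Type*} {k : ℕ} (n : ℕ) (a : Fin n → Fin k → A) (b : Fin n → Fin k → B)
    (i : Fin n) : List ((Fin k → A) × (Fin k → B)) :=
  List.ofFn (fun j : Fin i.1 => (a ⟨j.1, j.2.trans i.2⟩, b ⟨j.1, j.2.trans i.2⟩))

/-- A strategy for Duplicator: responses to Spoiler moves in `A` and in `B`,
given the history of earlier rounds. -/
structure DupStrategy (L : FirstOrder.Language) (k : ℕ) (A B : Type*)
    [L.Structure A] [L.Structure B] where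
  respB : List ((Fin k → A) × (Fin k → B)) → (Fin k → A) → (Fin k → B)
  respA : List ((Fin k → A) × (Fin k → B)) → (Fin k → B) → (Fin k → A)

/-- A play `(a, b)` of the `(n,k)`-prefix EF game is consistent with Duplicator's strategy:
in odd rounds (`i.1` even) Spoiler moves in `A` and Duplicator responds in `B`, in even
rounds Spoiler moves in `B` and Duplicator responds in `A`. -/
def DupStrategy.Consistent {A B : Type*} [L.Structure A] [L.Structure B] {k : ℕ}
    (st : DupStrategy L k A B) (n : ℕ)
    (a : Fin n → Fin k → A) (b : Fin n → Fin k → B) : Prop :=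
  ∀ i : Fin n,
    (i.1 % 2 = 0 → b i = st.respB (histOf n a b i) (a i)) ∧
    (i.1 % 2 = 1 → a i = st.respA (histOf n a b i) (b i))

/-- The map sending `a` pointwise to `b` is a partial isomorphism (for a relational
language). -/
def IsPartialIso (L : FirstOrder.Language) {ι : Type*} (A B : Type*)
    [L.Structure A] [L.Structure B] (a : ι → A) (b : ι → B) : Prop :=
  (∀ p q : ι, a p = a q ↔ b p = b q) ∧
    ∀ (m : ℕ) (r : L.Relations m) (v : Fin m → ι),
      (Structure.RelMap r (a ∘ v) ↔ Structure.RelMap r (b ∘ v))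

/-- Duplicator's strategy is winning in the `(n,k)`-prefix EF game. -/
def DupStrategy.Winning {A B : Type*} [L.Structure A] [L.Structure B] {k : ℕ}
    (st : DupStrategy L k A B) (n : ℕ) : Prop :=
  ∀ (a : Fin n → Fin k → A) (b : Fin n → Fin k → B), st.Consistent n a b →
    IsPartialIso L A B (fun p : Fin n × Fin k => a p.1 p.2) (fun p : Fin n × Fin k => b p.1 p.2)


/-! ### The vocabularies `σ_n` -/

/-- Indices `i` with `2 ≤ i ≤ n`, indexing the symbols `P_i, S_i, R_i` of `σ_n`. -/
abbrev HighIdx (n : ℕ) : Type := {i : ℕ // 2 ≤ i ∧ i ≤ n}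

/-- The vocabulary `σ_n`: binary symbols `≤, S, R` and `S_i, R_i` (for `2 ≤ i ≤ n`),
and unary symbols `P_i` (for `2 ≤ i ≤ n`).  In particular `σ_1` has exactly the three
binary symbols `≤, S, R`. -/
def sig (n : ℕ) : FirstOrder.Language where
  Functions := fun _ => Empty
  Relations := fun m =>
    match m with
    | 1 => HighIdx n
    | 2 => (Fin 3) ⊕ (HighIdx n × Bool)
    | _ => Empty

/-- The symbol `≤` of `σ_n`. -/
def leSym (n : ℕ) : (sig n).Relations 2 := Sum.inl 0
/-- The symbol `S` of `σ_n`. -/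
def sSym (n : ℕ) : (sig n).Relations 2 := Sum.inl 1
/-- The symbol `R` of `σ_n`. -/
def rSym (n : ℕ) : (sig n).Relations 2 := Sum.inl 2
/-- The symbol `S_i` of `σ_n`. -/
def snSym (n i : ℕ) (h : 2 ≤ i ∧ i ≤ n) : (sig n).Relations 2 := Sum.inr (⟨i, h⟩, false)
/-- The symbol `R_i` of `σ_n`. -/
def rnSym (n i : ℕ) (h : 2 ≤ i ∧ i ≤ n) : (sig n).Relations 2 := Sum.inr (⟨i, h⟩, true)
/-- The symbol `P_i` of `σ_n`. -/
def pnSym (n i : ℕ) (h : 2 ≤ i ∧ i ≤ n) : (sig n).Relations 1 := ⟨i, h⟩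

/-! ### Semantics of the sentences `SomeTotalR_n` -/

/-- A bundle of interpretations of all the symbols of the vocabularies `σ_n` over a
universe `A`. -/
structure Interp (A : Type*) where
  le : A → A → Prop
  S : A → A → Prop
  R : A → A → Prop
  Sn : ℕ → A → A → Prop
  Rn : ℕ → A → A → Prop
  Pn : ℕ → A → Prop

variable {A : Type*}

/-- `x < y` as an abbreviation for `x ≤ y ∧ x ≠ y`. -/
def Interp.lt (I : Interp A) (x y : A) : Prop := I.le x y ∧ x ≠ y

/-- `STR I m D` is the meaning of the sentence `SomeTotalR_{m+1}` with all quantifiers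
relativized to the set `D`.
For `m = 0`: `¬PartialSucc ∨ ∃ x y (R(x,y) ∧ Total(x,y))` where `PartialSucc` says that
`S(x,y)` implies `y` is the immediate `≤`-successor of `x`, and `Total(x,y)` says that
`x < y` and every `z` in `[x,y)` has an `S`-successor within `(z,y]`.
For `m+1` (i.e. `SomeTotalR_n`, `n = m+2`): the same with `S` replaced by
`Succ_n(x,y) := P_n(x) ∧ P_n(y) ∧ S_n(x,y) ∧ (SomeTotalR_{n-1})^{[x,y]}`, the quantifier
in `PartialSucc_n` and `Total_n` relativized to `P_n`, and `R` replaced by `R_n`. -/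
def STR (I : Interp A) : ℕ → (A → Prop) → Prop
  | 0, D =>
      (¬ ∀ x y, D x → D y → I.S x y →
          (I.lt x y ∧ ∀ z, D z → ¬(I.lt x z ∧ I.lt z y))) ∨
      ∃ x y, D x ∧ D y ∧ I.R x y ∧
        (I.lt x y ∧ ∀ z, D z → I.le x z → I.lt z y →
          ∃ w, D w ∧ I.lt z w ∧ I.le w y ∧ I.S z w)
  | m + 1, D =>
      let nn := m + 2
      let Succn : A → A → Prop := fun x y =>
        I.Pn nn x ∧ I.Pn nn y ∧ I.Sn nn x y ∧
          (I.le x y ∧ STR I m (fun z => D z ∧ I.le x z ∧ I.le z y))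
      (¬ ∀ x y, D x → D y → Succn x y →
          ∀ z, D z → I.Pn nn z → I.le z x ∨ I.le y z) ∨
      ∃ x y, D x ∧ D y ∧ I.Rn nn x y ∧
        (I.lt x y ∧ ∀ z, D z → I.Pn nn z → I.le x z → I.lt z y →
          ∃ w, D w ∧ I.lt z w ∧ I.le w y ∧ Succn z w)

/-- The meaning of the sentence `SomeTotalR_n` (for `n ≥ 1`). -/
def SomeTotalRSem (n : ℕ) (I : Interp A) : Prop :=
  STR I (n - 1) (fun _ => True)

/-- The interpretation bundle determined by a `σ_n`-structure. -/
def interpOf (n : ℕ) (A : Type*) [(sig n).Structure A] : Interp A where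
  le := fun x y => FirstOrder.Language.Structure.RelMap (leSym n) ![x, y]
  S := fun x y => FirstOrder.Language.Structure.RelMap (sSym n) ![x, y]
  R := fun x y => FirstOrder.Language.Structure.RelMap (rSym n) ![x, y]
  Sn := fun i x y => ∃ h : 2 ≤ i ∧ i ≤ n,
    FirstOrder.Language.Structure.RelMap (snSym n i h) ![x, y]
  Rn := fun i x y => ∃ h : 2 ≤ i ∧ i ≤ n,
    FirstOrder.Language.Structure.RelMap (rnSym n i h) ![x, y]
  Pn := fun i x => ∃ h : 2 ≤ i ∧ i ≤ n,
    FirstOrder.Language.Structure.RelMap (pnSym n i h) ![x]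

/-- The `σ_n`-structure determined by an interpretation bundle. -/
def strOf (n : ℕ) {A : Type*} (I : Interp A) : (sig n).Structure A where
  funMap := fun {m} f _ => Empty.elim f
  RelMap := fun {m} =>
    match m with
    | 0 => fun r _ => Empty.elim r
    | 1 => fun r v => I.Pn r.1 (v 0)
    | 2 => fun r v =>
        match r with
        | Sum.inl i =>
            if i = 0 then I.le (v 0) (v 1)
            else if i = 1 then I.S (v 0) (v 1) else I.R (v 0) (v 1)
        | Sum.inr (j, b) => if b then I.Rn j.1 (v 0) (v 1) else I.Sn j.1 (v 0) (v 1)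
    | _ + 3 => fun r _ => Empty.elim r

/-! ### Concrete construction of the structures `Tot_{n,k}`, `Gap_{n,k}`, `M_{n,k}`, `N_{n,k}` -/

/-- A finite ordered `σ`-interpretation with universe `{0, …, last}` (i.e. `Fin (last+1)`),
where `≤` is the natural linear order; the remaining relations are given as predicates on
the underlying natural numbers. -/
structure NInterp where
  last : ℕ
  S : ℕ → ℕ → Prop
  R : ℕ → ℕ → Prop
  Sn : ℕ → ℕ → ℕ → Prop
  Rn : ℕ → ℕ → ℕ → Prop
  Pn : ℕ → ℕ → Prop

/-- The universe of an `NInterp`. -/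
abbrev NInterp.Carrier (I : NInterp) : Type := Fin (I.last + 1)

/-- The interpretation bundle of an `NInterp`. -/
def NInterp.toInterp (I : NInterp) : Interp I.Carrier where
  le := fun x y => x ≤ y
  S := fun x y => I.S x.1 y.1
  R := fun x y => I.R x.1 y.1
  Sn := fun i x y => I.Sn i x.1 y.1
  Rn := fun i x y => I.Rn i x.1 y.1
  Pn := fun i x => I.Pn i x.1

/-- The ordered sum of two `NInterp`s: the maximum (`I.last`) of the first is identified
with the minimum (`0`) of the second, and all relations other than `≤` are unions. -/
def glue2 (I J : NInterp) : NInterp where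
  last := I.last + J.last
  S := fun x y => I.S x y ∨ ∃ a b, J.S a b ∧ x = I.last + a ∧ y = I.last + b
  R := fun x y => I.R x y ∨ ∃ a b, J.R a b ∧ x = I.last + a ∧ y = I.last + b
  Sn := fun i x y => I.Sn i x y ∨ ∃ a b, J.Sn i a b ∧ x = I.last + a ∧ y = I.last + b
  Rn := fun i x y => I.Rn i x y ∨ ∃ a b, J.Rn i a b ∧ x = I.last + a ∧ y = I.last + b
  Pn := fun i x => I.Pn i x ∨ ∃ a, J.Pn i a ∧ x = I.last + a

/-- Iterated ordered sum `I ⊕ J₁ ⊕ ⋯ ⊕ Jₘ`. -/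
def glueList : NInterp → List NInterp → NInterp
  | I, [] => I
  | I, J :: rest => glueList (glue2 I J) rest

/-- The ordered sum of `c` copies of `I` (for `c ≥ 1`). -/
def glueRep (I : NInterp) (c : ℕ) : NInterp :=
  glueList I (List.replicate (c - 1) I)

/-- `Tot_{1,k}` : universe of size `m = 6(k+2)²`, `S` the full successor relation,
`R = {(min, max)}`. -/
def Tot1 (k : ℕ) : NInterp where
  last := 6 * (k + 2) ^ 2 - 1
  S := fun x y => y = x + 1
  R := fun x y => x = 0 ∧ y = 6 * (k + 2) ^ 2 - 1
  Sn := fun _ _ _ => False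
  Rn := fun _ _ _ => False
  Pn := fun _ _ => False

/-- `Gap_{1,k}` : as `Tot_{1,k}` but with the central successor pair
`(m/2, m/2+1)` (1-indexed) removed from `S`. -/
def Gap1 (k : ℕ) : NInterp where
  last := 6 * (k + 2) ^ 2 - 1
  S := fun x y => y = x + 1 ∧ y ≠ 3 * (k + 2) ^ 2
  R := fun x y => x = 0 ∧ y = 6 * (k + 2) ^ 2 - 1
  Sn := fun _ _ _ => False
  Rn := fun _ _ _ => False
  Pn := fun _ _ => False

/-- The expansion `A ↦ A⁺` from `σ_{n-1}` to `σ_n`: `P_n = {min, max}`,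
`S_n = {(min, max)}`, `R_n = ∅`. -/
def plusN (n : ℕ) (I : NInterp) : NInterp where
  last := I.last
  S := I.S
  R := I.R
  Sn := fun i x y => I.Sn i x y ∨ (i = n ∧ x = 0 ∧ y = I.last)
  Rn := I.Rn
  Pn := fun i x => I.Pn i x ∨ (i = n ∧ (x = 0 ∨ x = I.last))

/-- Add the pair `(min, max)` to the relation `R_n`. -/
def addRn (n : ℕ) (I : NInterp) : NInterp :=
  { I with Rn := fun i x y => I.Rn i x y ∨ (i = n ∧ x = 0 ∧ y = I.last) }

/-- `fam m k = (Tot_{m+1,k}, Gap_{m+1,k}, M_{m+1,k}, N_{m+1,k})`, by the inductive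
construction:
* `N_{n,k}` is the ordered sum of `4(k+3)^{2n+1} + 2k + 1` copies of `Gap_{n,k}` and
  `M_{n,k}` is obtained from it by replacing the central copy with `Tot_{n,k}`;
* for `n ≥ 2`, `Tot_{n,k}` is obtained from the ordered sum of `4(k+3)^{2n} + 2k + 1`
  copies of `M⁺_{n-1,k}` by adding `(min, max)` to `R_n`, and `Gap_{n,k}` is obtained from
  it by replacing the central copy with `N⁺_{n-1,k}`. -/
def fam : ℕ → ℕ → NInterp × NInterp × NInterp × NInterp
  | 0, k =>
      let T := Tot1 k
      let G := Gap1 k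
      let half := 2 * (k + 3) ^ 3 + k
      (T, G,
        glueList (glueRep G half) (T :: List.replicate half G),
        glueRep G (4 * (k + 3) ^ 3 + 2 * k + 1))
  | m + 1, k =>
      let p := fam m k
      let nn := m + 2
      let Mp := plusN nn p.2.2.1
      let Np := plusN nn p.2.2.2
      let halfT := 2 * (k + 3) ^ (2 * nn) + k
      let T := addRn nn (glueRep Mp (4 * (k + 3) ^ (2 * nn) + 2 * k + 1))
      let G := addRn nn (glueList (glueRep Mp halfT) (Np :: List.replicate halfT Mp))
      let halfN := 2 * (k + 3) ^ (2 * nn + 1) + k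
      (T, G,
        glueList (glueRep G halfN) (T :: List.replicate halfN G),
        glueRep G (4 * (k + 3) ^ (2 * nn + 1) + 2 * k + 1))

/-- The structure `Tot_{n,k}`. -/
def TotNK (n k : ℕ) : NInterp := (fam (n - 1) k).1
/-- The structure `Gap_{n,k}`. -/
def GapNK (n k : ℕ) : NInterp := (fam (n - 1) k).2.1
/-- The structure `M_{n,k}`. -/
def MNK (n k : ℕ) : NInterp := (fam (n - 1) k).2.2.1
/-- The structure `N_{n,k}`. -/
def NNK (n k : ℕ) : NInterp := (fam (n - 1) k).2.2.2

/-- The `σ_n`-structure on the universe of an `NInterp`. -/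
def strOfN (n : ℕ) (I : NInterp) : (sig n).Structure I.Carrier :=
  strOf n I.toInterp



namespace P14
open Classical



/-- Step compatibility between a Tot-interval `[x,X]` and Gap-interval `[y,Y]`. -/
def StepOK (k H x y X Y : ℕ) : Prop :=
  (X - x = Y - y ∧ ¬(y < H ∧ H ≤ Y)) ∨
    (x + (2*k+2) ≤ X ∧ (y + (k+2) ≤ Y ∨ (y < H ∧ H ≤ Y)))

/-- A chain of matched pairs with successor-flag equivalence at each step. -/
def ChainFlag (H Lc : ℕ) (V W : ℕ → ℕ) : Prop :=
  ∀ q < Lc, V q < V (q+1) ∧ W q < W (q+1) ∧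
    (V (q+1) = V q + 1 ↔ (W (q+1) = W q + 1 ∧ W (q+1) ≠ H))

lemma chain_mono {H Lc V W} (h : ChainFlag H Lc V W) :
    ∀ b, b ≤ Lc → ∀ a, a ≤ b → V a + (b - a) ≤ V b ∧ W a + (b - a) ≤ W b := by
  intro b
  induction b with
  | zero =>
    intro _ a ha
    have h0 : a = 0 := by omega
    subst h0; omega
  | succ n ih =>
    intro hb a ha
    rcases Nat.lt_or_ge a (n+1) with h1 | h1
    · have hs := h n (by omega)
      have := ih (by omega) a (by omega)
      omega
    · have : a = n + 1 := by omega
      subst this; omega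

/-- Pairwise consequences of a flag chain. -/
lemma chain_pairs {H Lc V W} (h : ChainFlag H Lc V W) :
    ∀ a, a ≤ Lc → ∀ b, b ≤ Lc →
      (V a ≤ V b ↔ W a ≤ W b) ∧
      (V b = V a + 1 ↔ (W b = W a + 1 ∧ W b ≠ H)) := by
  intro a ha b hb
  rcases Nat.lt_trichotomy a b with hab | hab | hab
  · have hm := chain_mono h b hb a (le_of_lt hab)
    rcases Nat.lt_or_ge (a+1) b with h2 | h2
    · have hm2 := chain_mono h b hb (a+1) h2.le
      have hs := h a (by omega)
      constructor
      · constructor <;> intro _ <;> omega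
      · constructor
        · intro hv; exfalso; omega
        · intro hw; exfalso; omega
    · have : b = a + 1 := by omega
      subst this
      have hs := h a (by omega)
      refine ⟨by constructor <;> intro _ <;> omega, hs.2.2⟩
  · subst hab
    refine ⟨by omega, ?_⟩
    constructor
    · intro hv; omega
    · intro hw; omega
  · have hm := chain_mono h a ha b (le_of_lt hab)
    refine ⟨by constructor <;> intro _ <;> omega, ?_⟩
    constructor
    · intro hv; exfalso; omega
    · intro hw; exfalso; omega

lemma stepOK_flag {k H x y X Y : ℕ} (hok : StepOK k H x y X Y)
    (hx : x < X) (hy : y < Y) :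
    X = x + 1 ↔ (Y = y + 1 ∧ Y ≠ H) := by
  unfold StepOK at hok; omega

/-- Refinement of one compatible interval by duplicator's answers to `t` points. -/
lemma interval_refine {k H x y X Y : ℕ} (hk : 1 ≤ k)
    (hok : StepOK k H x y X Y) (hxX : x < X) (t : ℕ) (ht : t ≤ k)
    (W : ℕ → ℕ) (hW0 : W 0 = y) (hWt : W (t+1) = Y)
    (hWm : ∀ q ≤ t, W q < W (q+1)) :
    ∃ V : ℕ → ℕ, V 0 = x ∧ V (t+1) = X ∧ ChainFlag H (t+1) V W := by
  have hWchain : ∀ a b, a ≤ b → b ≤ t + 1 → W a + (b - a) ≤ W b := by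
    intro a b hab hb
    induction b with
    | zero => have : a = 0 := by omega
              subst this; omega
    | succ n ih =>
      rcases Nat.lt_or_ge a (n+1) with h1 | h1
      · have := hWm n (by omega)
        have := ih (by omega) (by omega)
        omega
      · have : a = n + 1 := by omega
        subst this; omega
  have hyY : y < Y := by
    have := hWchain 0 (t+1) (by omega) le_rfl; omega
  rcases hok with ⟨hrig, hnohole⟩ | ⟨hbig, hside⟩
  · -- rigid case
    refine ⟨fun q => x + (W q - y), ?_, ?_, ?_⟩
    · show x + (W 0 - y) = x
      omega
    · show x + (W (t+1) - y) = X
      omega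
    · intro q hq
      have hb1 := hWchain 0 q (by omega) (by omega)
      have hb2 := hWchain (q+1) (t+1) (by omega) (by omega)
      have hs := hWm q (by omega)
      refine ⟨?_, hs, ?_⟩
      · show x + (W q - y) < x + (W (q+1) - y)
        omega
      · show x + (W (q+1) - y) = x + (W q - y) + 1 ↔ _
        constructor
        · intro hv
          refine ⟨by omega, ?_⟩
          intro hWH; apply hnohole; omega
        · intro hw; omega
  · -- stretch case
    have hex : ∃ q, q ≤ t ∧ ¬(W (q+1) = W q + 1 ∧ W (q+1) ≠ H) := by
      by_contra hall
      push_neg at hall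
      have hval : ∀ q, q ≤ t + 1 → W q = y + q := by
        intro q
        induction q with
        | zero => intro _; omega
        | succ n ih =>
          intro hn
          have h1 := (hall n (by omega)).1
          have h2 := ih (by omega)
          omega
      have hY : Y = y + (t+1) := by have := hval (t+1) le_rfl; omega
      rcases hside with h | h
      · omega
      · have hq : H - y - 1 ≤ t := by omega
        have h3 := (hall (H - y - 1) hq).2
        have h4 := hval (H - y - 1 + 1) (by omega)
        omega
    obtain ⟨qs, hqs, hqsflag⟩ := hex
    classical
    let e : ℕ → ℕ := fun q => if (W (q+1) = W q + 1 ∧ W (q+1) ≠ H) then 1 else 2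
    let c : ℕ → ℕ := fun q => ∑ i ∈ Finset.range q, e i
    have hcstep : ∀ q, c (q+1) = c q + e q := by
      intro q; simp only [c, Finset.sum_range_succ]
    have hflag : ∀ q, (e q = 1) ↔ (W (q+1) = W q + 1 ∧ W (q+1) ≠ H) := by
      intro q
      rcases Classical.em (W (q+1) = W q + 1 ∧ W (q+1) ≠ H) with hf | hf
      · simp [e, hf]
      · simp only [e, if_neg hf]
        exact ⟨fun h2 => by omega, fun h2 => absurd h2 hf⟩
    have he12 : ∀ q, 1 ≤ e q ∧ e q ≤ 2 := by
      intro q; simp only [e]; split <;> omega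
    have hcmono : ∀ a b, a ≤ b → c a ≤ c b ∧ c b ≤ c a + 2 * (b - a) := by
      intro a b hab
      induction b with
      | zero => have : a = 0 := by omega
                subst this; omega
      | succ n ih =>
        rcases Nat.lt_or_ge a (n+1) with h1 | h1
        · have := hcstep n
          have := he12 n
          have := ih (by omega)
          omega
        · have : a = n+1 := by omega
          subst this; omega
    have hc0 : c 0 = 0 := by simp [c]
    have hct : c (t+1) ≤ 2 * (t+1) := by
      have := hcmono 0 (t+1) (by omega); omega
    have heqs : e qs = 2 := by
      have := hflag qs
      have := he12 qs
      omega
    have hXc : x + c (t+1) ≤ X := by omega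
    refine ⟨fun q => if q ≤ qs then x + c q else X - (c (t+1) - c q), ?_, ?_, ?_⟩
    · show (if 0 ≤ qs then x + c 0 else _) = x
      rw [if_pos (Nat.zero_le _)]; omega
    · show (if t + 1 ≤ qs then _ else X - (c (t+1) - c (t+1))) = X
      rw [if_neg (by omega)]; omega
    · intro q hq
      have hcq := hcstep q
      have heq := he12 q
      have hfq := hflag q
      have hcm1 := hcmono (q+1) (t+1) (by omega)
      have hcm0 := hcmono 0 q (by omega)
      refine ⟨?_, hWm q (by omega), ?_⟩
      · show (if q ≤ qs then x + c q else X - (c (t+1) - c q)) <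
            (if q + 1 ≤ qs then x + c (q+1) else X - (c (t+1) - c (q+1)))
        rcases Nat.lt_trichotomy q qs with h1 | h1 | h1
        · rw [if_pos (by omega), if_pos (by omega)]; omega
        · subst h1
          rw [if_pos le_rfl, if_neg (by omega)]
          have hcqs := hcstep q
          omega
        · rw [if_neg (by omega), if_neg (by omega)]; omega
      · show ((if q + 1 ≤ qs then x + c (q+1) else X - (c (t+1) - c (q+1))) =
            (if q ≤ qs then x + c q else X - (c (t+1) - c q)) + 1) ↔ _
        rcases Nat.lt_trichotomy q qs with h1 | h1 | h1
        · rw [if_pos (by omega), if_pos (by omega)]; omega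
        · subst h1
          rw [if_pos le_rfl, if_neg (by omega)]
          have hcqs := hcstep q
          constructor
          · intro hv; exfalso; omega
          · intro hw; exfalso; omega
        · rw [if_neg (by omega), if_neg (by omega)]; omega


section Round1
variable (k H Lw : ℕ) (x : ℕ → ℕ) (r : ℕ)

/-- step `i` is small -/
def Sm (i : ℕ) : Prop := x (i+1) ≤ x i + (2*k+1)
/-- index in the bottom cluster -/
def Blow (i : ℕ) : Prop := ∀ i' < i, Sm k x i'
/-- index in the top cluster -/
def Thigh (i : ℕ) : Prop := ∀ i', i ≤ i' → i' < r → Sm k x i'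

noncomputable def eStep (i : ℕ) : ℕ := if Sm k x i then x (i+1) - x i else k+2

noncomputable def off (i : ℕ) : ℕ :=
  ∑ i' ∈ Finset.range i, if Blow k x (i'+1) then 0 else eStep k x i'

noncomputable def yOf (i : ℕ) : ℕ :=
  if Blow k x i ∨ Thigh k x r i then x i else H + 1 + off k x i

variable {k H Lw x r}
variable (hk : 1 ≤ k) (hH : (2*k+1)*(k+1) + (k+4) ≤ H) (hL : Lw = 2*H - 1)
  (hr1 : 1 ≤ r) (hrk : r ≤ k + 1)
  (hx0 : x 0 = 0) (hxr : x r = Lw) (hxm : ∀ i < r, x i < x (i+1))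

include hx0 in
lemma xB_bound : ∀ i, Blow k x i → x i ≤ (2*k+1) * i := by
  intro i
  induction i with
  | zero => intro _; omega
  | succ n ih =>
    intro hB
    have h1 : x (n+1) ≤ x n + (2*k+1) := hB n (by omega)
    have h2 := ih (fun i' hi' => hB i' (by omega))
    have : (2*k+1) * (n+1) = (2*k+1) * n + (2*k+1) := by ring
    omega

include hxr in
lemma xT_bound : ∀ d i, i + d = r → Thigh k x r i → Lw ≤ x i + (2*k+1) * d := by
  intro d
  induction d with
  | zero =>
    intro i hi _
    have : i = r := by omega
    subst this; omega
  | succ n ih =>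
    intro i hi hT
    have h1 : x (i+1) ≤ x i + (2*k+1) := hT i le_rfl (by omega)
    have h2 := ih (i+1) (by omega) (fun i' h1' h2' => hT i' (by omega) h2')
    have : (2*k+1) * (n+1) = (2*k+1) * n + (2*k+1) := by ring
    omega

include hk hxm in
lemma off_bound : ∀ i, i ≤ r → off k x i ≤ (2*k+1) * i ∧
    (∀ j, i ≤ j → j ≤ r → off k x j ≤ off k x i + (2*k+1) * (j - i)) := by
  have key : ∀ i < r, (if Blow k x (i+1) then 0 else eStep k x i) ≤ 2*k+1 := by
    intro i hi
    split
    · omega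
    · unfold eStep
      rcases Classical.em (Sm k x i) with hs | hs
      · rw [if_pos hs]
        unfold Sm at hs
        have := hxm i hi; omega
      · rw [if_neg hs]; omega
  intro i hi
  constructor
  · induction i with
    | zero => simp [off]
    | succ n ih =>
      have h1 : off k x (n+1) = off k x n + (if Blow k x (n+1) then 0 else eStep k x n) := by
        simp [off, Finset.sum_range_succ]
      have h2 := key n (by omega)
      have h3 := ih (by omega)
      have : (2*k+1) * (n+1) = (2*k+1) * n + (2*k+1) := by ring
      omega
  · intro j hij hj
    induction j with
    | zero => have : i = 0 := by omega
              subst this; simp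
    | succ n ih =>
      rcases Nat.lt_or_ge i (n+1) with h1 | h1
      · have h2 : off k x (n+1) = off k x n + (if Blow k x (n+1) then 0 else eStep k x n) := by
          simp [off, Finset.sum_range_succ]
        have h3 := key n (by omega)
        have h4 := ih (by omega) (by omega)
        have h5 : (2*k+1) * (n+1-i) = (2*k+1) * (n-i) + (2*k+1) := by
          have : n+1-i = (n-i) + 1 := by omega
          rw [this]; ring
        omega
      · have : i = n+1 := by omega
        subst this; simp


include hxm in
lemma xmono_le : ∀ i j, i ≤ j → j ≤ r → x i ≤ x j ∧ (i < j → x i < x j) := by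
  intro i j hij hj
  induction j with
  | zero => have : i = 0 := by omega
            subst this; omega
  | succ n ih =>
    rcases Nat.lt_or_ge i (n+1) with h1 | h1
    · have := hxm n (by omega)
      have := ih (by omega) (by omega)
      omega
    · have : i = n+1 := by omega
      subst this; omega

include hk hH hL hr1 hrk hx0 hxr hxm in
lemma round1 :
    yOf k H x r 0 = 0 ∧ yOf k H x r r = Lw ∧ (∀ i, i ≤ r → yOf k H x r i ≤ Lw) ∧
    ∀ i < r, yOf k H x r i < yOf k H x r (i+1) ∧
      StepOK k H (x i) (yOf k H x r i) (x (i+1)) (yOf k H x r (i+1)) := by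
  have hB0 : Blow k x 0 := fun i' hi' => absurd hi' (by omega)
  have hTr : Thigh k x r r := fun i' h1 h2 => absurd h1 (by omega)
  have hy0 : yOf k H x r 0 = 0 := by
    unfold yOf; rw [if_pos (Or.inl hB0)]; exact hx0
  have hyr : yOf k H x r r = Lw := by
    unfold yOf; rw [if_pos (Or.inr hTr)]; exact hxr
  have hoffr : ∀ i, i ≤ r → off k x i ≤ (2*k+1)*(k+1) := by
    intro i hi
    have h1 := (off_bound hk hxm i hi).1
    have h2 : (2*k+1) * i ≤ (2*k+1)*(k+1) := Nat.mul_le_mul_left _ (by omega)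
    omega
  have hybound : ∀ i, i ≤ r → yOf k H x r i ≤ Lw := by
    intro i hi
    unfold yOf
    split
    · have := (xmono_le hxm i r hi le_rfl).1
      omega
    · have := hoffr i hi
      omega
  refine ⟨hy0, hyr, hybound, ?_⟩
  intro i hi
  by_cases hT : Thigh k x r i
  · have hT1 : Thigh k x r (i+1) := fun i' h1 h2 => hT i' (by omega) h2
    have hyi : yOf k H x r i = x i := by unfold yOf; rw [if_pos (Or.inr hT)]
    have hyi1 : yOf k H x r (i+1) = x (i+1) := by unfold yOf; rw [if_pos (Or.inr hT1)]
    rw [hyi, hyi1]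
    refine ⟨hxm i hi, ?_⟩
    by_cases hs : Sm k x i
    · left
      refine ⟨rfl, ?_⟩
      have h1 := xT_bound hxr (r - i) i (by omega) hT
      have h2 : (2*k+1)*(r-i) ≤ (2*k+1)*(k+1) := Nat.mul_le_mul_left _ (by omega)
      omega
    · right
      unfold Sm at hs
      omega
  · by_cases hB1 : Blow k x (i+1)
    · have hB : Blow k x i := fun i' hi' => hB1 i' (by omega)
      have hs : Sm k x i := hB1 i (by omega)
      have hyi : yOf k H x r i = x i := by unfold yOf; rw [if_pos (Or.inl hB)]
      have hyi1 : yOf k H x r (i+1) = x (i+1) := by unfold yOf; rw [if_pos (Or.inl hB1)]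
      rw [hyi, hyi1]
      refine ⟨hxm i hi, ?_⟩
      left
      refine ⟨rfl, ?_⟩
      have h1 := xB_bound hx0 (i+1) hB1
      have h2 : (2*k+1)*(i+1) ≤ (2*k+1)*(k+1) := Nat.mul_le_mul_left _ (by omega)
      omega
    · by_cases hB : Blow k x i
      · -- first large gap out of the bottom cluster
        have hs : ¬ Sm k x i := by
          intro hs
          exact hB1 (fun i' hi' => by
            rcases Nat.lt_or_ge i' i with h | h
            · exact hB i' h
            · have : i' = i := by omega
              subst this; exact hs)
        unfold Sm at hs
        have hyi : yOf k H x r i = x i := by unfold yOf; rw [if_pos (Or.inl hB)]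
        have hxiB := xB_bound hx0 i hB
        have h2 : (2*k+1)*i ≤ (2*k+1)*(k+1) := Nat.mul_le_mul_left _ (by omega)
        by_cases hT1 : Thigh k x r (i+1)
        · have hyi1 : yOf k H x r (i+1) = x (i+1) := by unfold yOf; rw [if_pos (Or.inr hT1)]
          rw [hyi, hyi1]
          refine ⟨hxm i hi, ?_⟩
          right
          omega
        · have hyi1 : yOf k H x r (i+1) = H + 1 + off k x (i+1) := by
            unfold yOf; rw [if_neg (by tauto)]
          rw [hyi, hyi1]
          constructor
          · omega
          · right
            omega
      · -- i is a middle index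
        have hyi : yOf k H x r i = H + 1 + off k x i := by
          unfold yOf; rw [if_neg (by tauto)]
        have hoffi := (off_bound hk hxm i (by omega)).1
        by_cases hT1 : Thigh k x r (i+1)
        · -- last large gap into the top cluster
          have hs : ¬ Sm k x i := by
            intro hs
            exact hT (fun i' h1 h2 => by
              rcases Nat.lt_or_ge i' (i+1) with h | h
              · have : i' = i := by omega
                subst this; exact hs
              · exact hT1 i' h h2)
          unfold Sm at hs
          have hyi1 : yOf k H x r (i+1) = x (i+1) := by unfold yOf; rw [if_pos (Or.inr hT1)]
          rw [hyi, hyi1]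
          have h1 := xT_bound hxr (r - (i+1)) (i+1) (by omega) hT1
          have hmul : (2*k+1)*i + (2*k+1)*(r-(i+1)) = (2*k+1)*(r-1) := by
            rw [← Nat.mul_add]
            congr 1
            omega
          have h2 : (2*k+1)*(r-1) ≤ (2*k+1)*(k+1) := Nat.mul_le_mul_left _ (by omega)
          constructor
          · omega
          · right
            omega
        · -- both middle
          have hyi1 : yOf k H x r (i+1) = H + 1 + off k x (i+1) := by
            unfold yOf; rw [if_neg (by tauto)]
          have hosucc : off k x (i+1) = off k x i + eStep k x i := by
            unfold off
            rw [Finset.sum_range_succ, if_neg hB1]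
          rw [hyi, hyi1]
          by_cases hs : Sm k x i
          · have hes : eStep k x i = x (i+1) - x i := by unfold eStep; rw [if_pos hs]
            unfold Sm at hs
            have := hxm i hi
            constructor
            · omega
            · left
              constructor
              · omega
              · omega
          · have hes : eStep k x i = k+2 := by unfold eStep; rw [if_neg hs]
            unfold Sm at hs
            constructor
            · omega
            · right
              omega

end Round1


/-! ### Assembly : the two-round combinatorial core -/

/-- The matching pattern required for quantifier-free transfer. -/
def Pat {iota : Type} (H Lw : ℕ) (v w : iota → ℕ) : Prop :=
  ∀ p q : iota,
    (v p ≤ v q ↔ w p ≤ w q) ∧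
    (v q = v p + 1 ↔ (w q = w p + 1 ∧ w q ≠ H)) ∧
    (v p = 0 ↔ w p = 0) ∧ (v p = Lw ↔ w p = Lw)

theorem core (k H Lw : ℕ) (hk : 1 ≤ k) (hH : (2*k+1)*(k+1) + (k+4) ≤ H)
    (hL : Lw = 2*H - 1) (j j' : ℕ) (hj : j ≤ k) (hj' : j' ≤ k)
    (a : Fin j → ℕ) (ha : ∀ p, a p ≤ Lw) :
    ∃ a' : Fin j → ℕ, (∀ p, a' p ≤ Lw) ∧
      ∀ b' : Fin j' → ℕ, (∀ p, b' p ≤ Lw) →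
        ∃ b : Fin j' → ℕ, (∀ p, b p ≤ Lw) ∧
          Pat H Lw (Sum.elim a b) (Sum.elim a' b') := by
  have hHL : H < Lw ∧ 1 ≤ H := by omega
  -- the finite set of round-1 points, with the two endpoints
  set s : Finset ℕ := insert 0 (insert Lw (Finset.image a Finset.univ)) with hs
  have hs0 : 0 ∈ s := Finset.mem_insert_self _ _
  have hsL : Lw ∈ s := Finset.mem_insert_of_mem (Finset.mem_insert_self _ _)
  have hsa : ∀ p, a p ∈ s := fun p =>
    Finset.mem_insert_of_mem (Finset.mem_insert_of_mem
      (Finset.mem_image_of_mem _ (Finset.mem_univ p)))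
  have hsle : ∀ u ∈ s, u ≤ Lw := by
    intro u hu
    rcases Finset.mem_insert.1 hu with h | h
    · omega
    rcases Finset.mem_insert.1 h with h | h
    · omega
    · obtain ⟨p, _, rfl⟩ := Finset.mem_image.1 h
      exact ha p
  have hcard : s.card ≤ k + 2 := by
    have h1 : (Finset.image a Finset.univ).card ≤ j := by
      apply le_trans (Finset.card_image_le)
      simp
    calc s.card ≤ (insert Lw (Finset.image a Finset.univ)).card + 1 :=
          Finset.card_insert_le _ _
      _ ≤ ((Finset.image a Finset.univ).card + 1) + 1 :=
          Nat.add_le_add_right (Finset.card_insert_le _ _) 1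
      _ ≤ k + 2 := by omega
  have hnpos : 0 < s.card := Finset.card_pos.2 ⟨0, hs0⟩
  set r : ℕ := s.card - 1 with hrdef
  have hrk : r ≤ k + 1 := by omega
  set emb := s.orderEmbOfFin (rfl : s.card = s.card) with hemb
  set x : ℕ → ℕ := fun i => emb ⟨min i r, Nat.lt_of_le_of_lt (Nat.min_le_right _ _) (by omega)⟩ with hx
  have hxval : ∀ i (hi : i ≤ r), x i = emb ⟨i, by omega⟩ := by
    intro i hi
    simp only [hx]
    congr 1
    exact Fin.ext (by simp [Nat.min_eq_left hi])
  have hxm : ∀ i < r, x i < x (i+1) := by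
    intro i hi
    rw [hxval i (by omega), hxval (i+1) (by omega)]
    exact emb.strictMono (by simp [Fin.lt_def])
  have hx0 : x 0 = 0 := by
    rw [hxval 0 (by omega)]
    have h0 : emb ⟨0, hnpos⟩ = s.min' ⟨0, hs0⟩ := Finset.orderEmbOfFin_zero _ hnpos
    have : s.min' ⟨0, hs0⟩ = 0 :=
      le_antisymm (Finset.min'_le _ _ hs0) (Nat.zero_le _)
    rw [h0, this]
  have hxr : x r = Lw := by
    rw [hxval r le_rfl]
    have h0 : emb ⟨s.card - 1, by omega⟩ = s.max' ⟨0, hs0⟩ :=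
      Finset.orderEmbOfFin_last _ hnpos
    have h1 : s.max' ⟨0, hs0⟩ = Lw :=
      le_antisymm (Finset.max'_le _ _ _ hsle) (Finset.le_max' _ _ hsL)
    have hfin : (⟨r, by omega⟩ : Fin s.card) = ⟨s.card - 1, by omega⟩ := Fin.ext hrdef
    rw [hfin, h0, h1]
  have hr1 : 1 ≤ r := by
    rcases Nat.eq_zero_or_pos r with h0 | h0
    · exfalso
      have h2 := hxr
      rw [h0] at h2
      omega
    · exact h0
  have hmemx : ∀ u ∈ s, ∃ i, i ≤ r ∧ x i = u := by
    intro u hu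
    have : u ∈ Set.range emb := by
      rw [Finset.range_orderEmbOfFin]
      exact hu
    obtain ⟨i, hi⟩ := this
    exact ⟨i.1, by omega, by rw [hxval i.1 (by omega)]; convert hi⟩
  -- round-1 answers
  set y : ℕ → ℕ := yOf k H x r with hy
  obtain ⟨hy0, hyr, hyb, hystep⟩ := round1 hk hH hL hr1 hrk hx0 hxr hxm (Lw := Lw)
  rw [← hy] at hy0 hyr hyb hystep
  have hym : ∀ i < r, y i < y (i+1) := fun i hi => (hystep i hi).1
  have anchorChain : ChainFlag H r x y := by
    intro i hi
    obtain ⟨h1, h2⟩ := hystep i hi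
    exact ⟨hxm i hi, h1, stepOK_flag h2 (hxm i hi) h1⟩
  have hxmono := xmono_le (x := x) (r := r) hxm
  have hymono := xmono_le (x := y) (r := r) hym
  -- choice of indices for the round-1 points
  have hidx : ∀ p, ∃ i, i ≤ r ∧ x i = a p := fun p => hmemx (a p) (hsa p)
  choose idx hidxr hidxv using hidx
  refine ⟨fun p => y (idx p), fun p => hyb _ (hidxr p), ?_⟩
  -- round 2
  intro b' hb'
  -- per-interval refinement
  have hinterval : ∀ i, i < r →
      ∃ (t : ℕ) (Wf Vf : ℕ → ℕ), t ≤ k ∧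
        Wf 0 = y i ∧ Wf (t+1) = y (i+1) ∧ Vf 0 = x i ∧ Vf (t+1) = x (i+1) ∧
        ChainFlag H (t+1) Vf Wf ∧
        ∀ p : Fin j', y i < b' p → b' p < y (i+1) → ∃ q, 1 ≤ q ∧ q ≤ t ∧ Wf q = b' p := by
    intro i hi
    classical
    set Q : Finset ℕ :=
      (Finset.image b' Finset.univ).filter (fun u => y i < u ∧ u < y (i+1)) with hQ
    set t : ℕ := Q.card with ht
    have htk : t ≤ k := by
      have h1 : Q.card ≤ (Finset.image b' Finset.univ).card := Finset.card_filter_le _ _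
      have h2 : (Finset.image b' Finset.univ).card ≤ j' := by
        apply le_trans (Finset.card_image_le)
        simp
      omega
    set embQ := Q.orderEmbOfFin (rfl : Q.card = t) with hembQ
    have hQmemP : ∀ u ∈ Q, y i < u ∧ u < y (i+1) := by
      intro u hu
      exact (Finset.mem_filter.1 hu).2
    set Wf : ℕ → ℕ := fun q =>
      if h : 1 ≤ q ∧ q ≤ t then embQ ⟨q - 1, by omega⟩
      else if q = 0 then y i else y (i+1) with hWf
    have hWf0 : Wf 0 = y i := by simp [hWf]
    have hWft : Wf (t+1) = y (i+1) := by
      simp only [hWf]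
      rw [dif_neg (by omega), if_neg (by omega)]
    have hWfq : ∀ q (h1 : 1 ≤ q) (h2 : q ≤ t), Wf q = embQ ⟨q - 1, by omega⟩ := by
      intro q h1 h2
      simp only [hWf]
      rw [dif_pos ⟨h1, h2⟩]
    have hWfmemQ : ∀ q, 1 ≤ q → q ≤ t → Wf q ∈ Q := by
      intro q h1 h2
      rw [hWfq q h1 h2]
      exact Finset.orderEmbOfFin_mem _ _ _
    have hWm : ∀ q ≤ t, Wf q < Wf (q+1) := by
      intro q hq
      rcases Nat.eq_zero_or_pos q with h0 | h0
      · subst h0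
        rw [hWf0]
        rcases Nat.eq_zero_or_pos t with ht0 | ht0
        · have h1 : Wf 1 = y (i+1) := by
            simp only [hWf]
            rw [dif_neg (by omega), if_neg (by omega)]
          rw [h1]; exact hym i hi
        · exact (hQmemP _ (hWfmemQ 1 le_rfl ht0)).1
      · rcases Nat.lt_or_ge q t with hlt | hge
        · rw [hWfq q h0 (by omega), hWfq (q+1) (by omega) (by omega)]
          exact embQ.strictMono (Fin.mk_lt_mk.mpr (by omega))
        · have h1 : Wf (q+1) = y (i+1) := by
            simp only [hWf]
            rw [dif_neg (by omega), if_neg (by omega)]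
          rw [h1]
          exact (hQmemP _ (hWfmemQ q h0 (by omega))).2
    obtain ⟨Vf, hVf0, hVft, hVfchain⟩ :=
      interval_refine hk (hystep i hi).2 (hxm i hi) t htk Wf hWf0 hWft hWm
    refine ⟨t, Wf, Vf, htk, hWf0, hWft, hVf0, hVft, hVfchain, ?_⟩
    intro p hp1 hp2
    have hpQ : b' p ∈ Q := by
      rw [hQ, Finset.mem_filter]
      exact ⟨Finset.mem_image_of_mem _ (Finset.mem_univ p), hp1, hp2⟩
    have : b' p ∈ Set.range embQ := by
      rw [Finset.range_orderEmbOfFin]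
      exact hpQ
    obtain ⟨qf, hqf⟩ := this
    refine ⟨qf.1 + 1, by omega, by omega, ?_⟩
    rw [hWfq _ (by omega) (by omega)]
    exact hqf
  choose tI WI VI htI hWI0 hWIt hVI0 hVIt hchainI hcovI using hinterval
  -- the linking relation between Gap-side and Tot-side values
  set Linked : ℕ → ℕ → Prop := fun u v =>
    (∃ i, i ≤ r ∧ u = y i ∧ v = x i) ∨
    (∃ i, ∃ hi : i < r, ∃ q, 1 ≤ q ∧ q ≤ tI i hi ∧ WI i hi q = u ∧ VI i hi q = v)
    with hLinked
  -- basic consequences for inner points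
  have hinner : ∀ i (hi : i < r) q, 1 ≤ q → q ≤ tI i hi →
      x i < VI i hi q ∧ VI i hi q < x (i+1) ∧ y i < WI i hi q ∧ WI i hi q < y (i+1) := by
    intro i hi q h1 h2
    have hm1 := chain_mono (hchainI i hi) q (by omega) 0 (by omega)
    have hm2 := chain_mono (hchainI i hi) (tI i hi + 1) (by omega) q (by omega)
    rw [hVI0 i hi, hWI0 i hi] at hm1
    rw [hVIt i hi, hWIt i hi] at hm2
    omega
  -- the key pairwise lemma
  have hpair : ∀ u v u' v', Linked u v → Linked u' v' →
      (v ≤ v' ↔ u ≤ u') ∧ (v' = v + 1 ↔ (u' = u + 1 ∧ u' ≠ H)) := by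
    intro u v u' v' h1 h2
    -- separation helper facts
    have hxsep : ∀ i1 i2, i1 < i2 → i2 ≤ r → x i1 < x i2 ∧ y i1 < y i2 := by
      intro i1 i2 hlt hle
      have := (hxmono i1 i2 (by omega) hle).2 hlt
      have := (hymono i1 i2 (by omega) hle).2 hlt
      omega
    rcases h1 with ⟨i1, hi1, rfl, rfl⟩ | ⟨i1, hi1, q1, hq11, hq12, hw1, hv1⟩
    · rcases h2 with ⟨i2, hi2, rfl, rfl⟩ | ⟨i2, hi2, q2, hq21, hq22, hw2, hv2⟩
      · -- anchor / anchor
        exact chain_pairs anchorChain i1 hi1 i2 hi2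
      · -- anchor / inner
        subst hw2; subst hv2
        have hio := hinner i2 hi2 q2 hq21 hq22
        rcases Nat.lt_or_ge i1 i2 with hc | hc
        · -- anchor strictly below the interval
          have hs1 := hxsep i1 i2 hc (by omega)
          constructor
          · constructor <;> intro _ <;> omega
          · constructor <;> (intro hcc; exfalso; omega)
        · rcases Nat.eq_or_lt_of_le hc with hc2 | hc2
          · -- left endpoint of the interval : chain positions 0 and q2
            subst hc2
            have hcp := chain_pairs (hchainI i2 hi2) 0 (by omega) q2 (by omega)
            rw [hVI0 i2 hi2, hWI0 i2 hi2] at hcp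
            exact hcp
          · rcases Nat.eq_or_lt_of_le hc2 with hc3 | hc3
            · -- right endpoint : chain positions q2 and t+1
              have hcp := chain_pairs (hchainI i2 hi2) (tI i2 hi2 + 1) (by omega) q2 (by omega)
              have hc3' : i2 + 1 = i1 := hc3
              rw [hVIt i2 hi2, hWIt i2 hi2, hc3'] at hcp
              exact hcp
            · -- anchor strictly above the interval
              have hs1 := hxsep (i2+1) i1 hc3 hi1
              constructor
              · constructor <;> intro _ <;> omega
              · constructor <;> (intro hcc; exfalso; omega)
    · subst hw1; subst hv1
      have hio := hinner i1 hi1 q1 hq11 hq12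
      rcases h2 with ⟨i2, hi2, rfl, rfl⟩ | ⟨i2, hi2, q2, hq21, hq22, hw2, hv2⟩
      · -- inner / anchor
        rcases Nat.lt_or_ge i2 i1 with hc | hc
        · have hs1 := hxsep i2 i1 hc (by omega)
          constructor
          · constructor <;> intro _ <;> omega
          · constructor <;> (intro hcc; exfalso; omega)
        · rcases Nat.eq_or_lt_of_le hc with hc2 | hc2
          · subst hc2
            have hcp := chain_pairs (hchainI i1 hi1) q1 (by omega) 0 (by omega)
            rw [hVI0 i1 hi1, hWI0 i1 hi1] at hcp
            exact hcp
          · rcases Nat.eq_or_lt_of_le hc2 with hc3 | hc3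
            · have hcp := chain_pairs (hchainI i1 hi1) q1 (by omega) (tI i1 hi1 + 1) (by omega)
              have hc3' : i1 + 1 = i2 := hc3
              rw [hVIt i1 hi1, hWIt i1 hi1, hc3'] at hcp
              exact hcp
            · have hs1 := hxsep (i1+1) i2 hc3 hi2
              constructor
              · constructor <;> intro _ <;> omega
              · constructor <;> (intro hcc; exfalso; omega)
      · -- inner / inner
        subst hw2; subst hv2
        have hio2 := hinner i2 hi2 q2 hq21 hq22
        rcases Nat.lt_trichotomy i1 i2 with hc | hc | hc
        · have hxa := (hxmono (i1+1) i2 (by omega) (by omega)).1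
          have hya := (hymono (i1+1) i2 (by omega) (by omega)).1
          constructor
          · constructor <;> intro _ <;> omega
          · constructor <;> (intro hcc; exfalso; omega)
        · subst hc
          have hpf : hi1 = hi2 := rfl
          subst hpf
          have hcp := chain_pairs (hchainI i1 hi1) q1 (by omega) q2 (by omega)
          exact hcp
        · have hxa := (hxmono (i2+1) i1 (by omega) (by omega)).1
          have hya := (hymono (i2+1) i1 (by omega) (by omega)).1
          constructor
          · constructor <;> intro _ <;> omega
          · constructor <;> (intro hcc; exfalso; omega)
  -- zero/last/bounds consequences
  have hzl : ∀ u v, Linked u v →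
      (v = 0 ↔ u = 0) ∧ (v = Lw ↔ u = Lw) ∧ v ≤ Lw ∧ u ≤ Lw := by
    intro u v hlk
    rcases hlk with ⟨i, hi, rfl, rfl⟩ | ⟨i, hi, q, hq1, hq2, hw, hv⟩
    · have h1 := hxmono 0 i (by omega) hi
      have h2 := hymono 0 i (by omega) hi
      have h3 := hxmono i r hi le_rfl
      have h4 := hymono i r hi le_rfl
      rcases Nat.eq_zero_or_pos i with h0 | h0
      · subst h0
        rw [hx0, hy0]
        rcases Nat.eq_or_lt_of_le hr1 with he | he
        · rw [← he] at hxr hyr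
          omega
        · have h5 := (hxmono 0 r (by omega) le_rfl).2 (by omega)
          have h6 := (hymono 0 r (by omega) le_rfl).2 (by omega)
          omega
      · rcases Nat.eq_or_lt_of_le hi with he | he
        · subst he
          omega
        · have h5 := (hxmono i r hi le_rfl).2 he
          have h6 := (hymono i r hi le_rfl).2 he
          omega
    · subst hw; subst hv
      have hio := hinner i hi q hq1 hq2
      have h1 := (hxmono 0 i (by omega) (by omega)).1
      have h2 := (hymono 0 i (by omega) (by omega)).1
      have h3 := (hxmono (i+1) r (by omega) le_rfl).1
      have h4 := (hymono (i+1) r (by omega) le_rfl).1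
      omega
  -- locating any Gap-side value
  have hloc : ∀ m, m ≤ r → ∀ u, u ≤ y m →
      (∃ i, i ≤ m ∧ y i = u) ∨ (∃ i, i < m ∧ y i < u ∧ u < y (i+1)) := by
    intro m
    induction m with
    | zero =>
      intro _ u hu
      left
      refine ⟨0, le_rfl, ?_⟩
      rw [hy0]; omega
    | succ n ih =>
      intro hn u hu
      rcases Nat.eq_or_lt_of_le hu with he | he
      · left; exact ⟨n+1, le_rfl, he.symm⟩
      · rcases le_or_gt u (y n) with h1 | h1
        · rcases ih (by omega) u h1 with ⟨i, h2, h3⟩ | ⟨i, h2, h3⟩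
          · left; exact ⟨i, by omega, h3⟩
          · right; exact ⟨i, by omega, h3⟩
        · right; exact ⟨n, by omega, h1, he⟩
  have hcover : ∀ p : Fin j', ∃ v, Linked (b' p) v := by
    intro p
    have hup : b' p ≤ y r := by rw [hyr]; exact hb' p
    rcases hloc r le_rfl (b' p) hup with ⟨i, h2, h3⟩ | ⟨i, h2, h3⟩
    · exact ⟨x i, Or.inl ⟨i, h2, h3.symm, rfl⟩⟩
    · obtain ⟨q, hq1, hq2, hq3⟩ := hcovI i h2 p h3.1 h3.2
      exact ⟨VI i h2 q, Or.inr ⟨i, h2, q, hq1, hq2, hq3, rfl⟩⟩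
  choose bfun hbf using hcover
  have hLall : ∀ pp : Fin j ⊕ Fin j',
      Linked (Sum.elim (fun p => y (idx p)) b' pp) (Sum.elim a bfun pp) := by
    intro pp
    rcases pp with p | p
    · exact Or.inl ⟨idx p, hidxr p, rfl, (hidxv p).symm⟩
    · exact hbf p
  refine ⟨bfun, fun p => ((hzl _ _ (hbf p)).2.2).1, ?_⟩
  intro p q
  have h1 := hpair _ _ _ _ (hLall p) (hLall q)
  have h2 := hzl _ _ (hLall p)
  exact ⟨h1.1, h1.2, h2.1, h2.2.1⟩



end P14

/-! ### Logic layer -/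

section LogicLayer

open BoundedFormula

variable {M : Type*}

lemma append_fin_zero {m : ℕ} (xs : Fin m → M) (ys : Fin 0 → M) :
    Fin.append xs ys = xs := by
  rw [Fin.append_right_nil xs ys rfl]
  funext i
  exact congrArg xs (Fin.ext rfl)

variable [L.Structure M]

lemma realize_exN_iff {α : Type*} {dv : α → M} : ∀ (j : ℕ) {m : ℕ}
    (φ : L.BoundedFormula α (m + j)) (xs : Fin m → M),
    (exN j φ).Realize dv xs ↔ ∃ ys : Fin j → M, φ.Realize dv (Fin.append xs ys)
  | 0, m, φ, xs => by
    constructor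
    · intro h
      exact ⟨finZeroElim, by rwa [append_fin_zero]⟩
    · rintro ⟨ys, h⟩
      rwa [append_fin_zero] at h
  | j+1, m, φ, xs => by
    rw [show exN (j+1) φ = exN j φ.ex from rfl, realize_exN_iff j φ.ex xs]
    constructor
    · rintro ⟨ys, hy⟩
      rw [BoundedFormula.realize_ex] at hy
      obtain ⟨aM, ha⟩ := hy
      exact ⟨Fin.snoc ys aM, by rwa [Fin.append_snoc]⟩
    · rintro ⟨ys, hy⟩
      refine ⟨Fin.init ys, ?_⟩
      rw [BoundedFormula.realize_ex]
      refine ⟨ys (Fin.last j), ?_⟩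
      rw [← Fin.append_snoc, Fin.snoc_init_self]
      exact hy

lemma realize_allN_iff {α : Type*} {dv : α → M} : ∀ (j : ℕ) {m : ℕ}
    (φ : L.BoundedFormula α (m + j)) (xs : Fin m → M),
    (allN j φ).Realize dv xs ↔ ∀ ys : Fin j → M, φ.Realize dv (Fin.append xs ys)
  | 0, m, φ, xs => by
    constructor
    · intro h ys
      rwa [append_fin_zero]
    · intro h
      have := h finZeroElim
      rwa [append_fin_zero] at this
  | j+1, m, φ, xs => by
    rw [show allN (j+1) φ = allN j φ.all from rfl, realize_allN_iff j φ.all xs]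
    constructor
    · intro hy ys
      have := hy (Fin.init ys)
      rw [BoundedFormula.realize_all] at this
      have := this (ys (Fin.last j))
      rwa [← Fin.append_snoc, Fin.snoc_init_self] at this
    · intro hy ys
      rw [BoundedFormula.realize_all]
      intro aM
      have := hy (Fin.snoc ys aM)
      rwa [Fin.append_snoc] at this

lemma term_eq_var (hfun : ∀ n, IsEmpty (L.Functions n)) {γ : Type*} (t : L.Term γ) :
    ∃ i, t = Term.var i := by
  cases t with
  | var i => exact ⟨i, rfl⟩
  | func f ts => exact ((hfun _).false f).elim

lemma qf_transfer {A B : Type*} [L.Structure A] [L.Structure B]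
    (hfun : ∀ n, IsEmpty (L.Functions n)) {n : ℕ} {φ : L.BoundedFormula Empty n}
    (h : φ.IsQF) (dA : Empty → A) (dB : Empty → B) (v : Fin n → A) (w : Fin n → B)
    (hrel : ∀ (m : ℕ) (R : L.Relations m) (ts : Fin m → Fin n),
      (Structure.RelMap R (fun i => v (ts i)) ↔ Structure.RelMap R (fun i => w (ts i))))
    (heq : ∀ p q : Fin n, v p = v q ↔ w p = w q) :
    φ.Realize dA v ↔ φ.Realize dB w := by
  induction h with
  | falsum => simp [BoundedFormula.Realize]
  | of_isAtomic ha =>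
    cases ha with
    | equal t₁ t₂ =>
      obtain ⟨s₁, rfl⟩ := term_eq_var hfun t₁
      obtain ⟨s₂, rfl⟩ := term_eq_var hfun t₂
      rcases s₁ with e | p
      · exact e.elim
      rcases s₂ with e | q
      · exact e.elim
      · show Term.realize _ _ = Term.realize _ _ ↔ Term.realize _ _ = Term.realize _ _
        simp only [Term.realize_var, Sum.elim_inr]
        exact heq p q
    | @rel m R ts =>
      have hts : ∀ i, ∃ p : Fin n, ts i = Term.var (Sum.inr p) := by
        intro i
        obtain ⟨s, hs⟩ := term_eq_var hfun (ts i)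
        rcases s with e | p
        · exact e.elim
        · exact ⟨p, hs⟩
      choose g hg using hts
      show Structure.RelMap R _ ↔ Structure.RelMap R _
      have h1 : (fun i => Term.realize (Sum.elim dA v) (ts i)) = fun i => v (g i) := by
        funext i; rw [hg i]; simp
      have h2 : (fun i => Term.realize (Sum.elim dB w) (ts i)) = fun i => w (g i) := by
        funext i; rw [hg i]; simp
      rw [h1, h2]
      exact hrel m R g
  | imp h1 h2 ih1 ih2 =>
    show (_ → _) ↔ (_ → _)
    rw [ih1, ih2]

end LogicLayer

/-! ### Bridging to the structures `Tot1`/`Gap1` -/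

section Bridge

lemma sig1_fun_empty : ∀ n, IsEmpty ((sig 1).Functions n) :=
  fun _ => inferInstanceAs (IsEmpty Empty)

lemma master (k : ℕ) (hk : 1 ≤ k) (j j' : ℕ) (hj : j ≤ k) (hj' : j' ≤ k)
    (θ : (sig 1).BoundedFormula Empty ((0 + j) + j')) (hθ : θ.IsQF)
    (hT : @Sentence.Realize (sig 1) (Tot1 k).Carrier (strOfN 1 (Tot1 k)) (exN j (allN j' θ))) :
    @Sentence.Realize (sig 1) (Gap1 k).Carrier (strOfN 1 (Gap1 k)) (exN j (allN j' θ)) := by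
  letI iT : (sig 1).Structure (Tot1 k).Carrier := strOfN 1 (Tot1 k)
  letI iG : (sig 1).Structure (Gap1 k).Carrier := strOfN 1 (Gap1 k)
  set H : ℕ := 3*(k+2)^2 with hHdef
  set Lv : ℕ := 6*(k+2)^2 - 1 with hLdef
  have hH : (2*k+1)*(k+1) + (k+4) ≤ H := by rw [hHdef]; nlinarith [sq_nonneg k]
  have hLv : Lv = 2*H - 1 := by rw [hHdef, hLdef]; omega
  have hTlast : (Tot1 k).last = Lv := rfl
  have hGlast : (Gap1 k).last = Lv := rfl
  unfold Sentence.Realize Formula.Realize at hT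
  rw [realize_exN_iff] at hT
  obtain ⟨va, hva⟩ := hT
  rw [realize_allN_iff] at hva
  -- numeric witnesses
  obtain ⟨a', ha', hcont⟩ := P14.core k H Lv hk hH hLv j j' hj hj'
    (fun p => (va p).1) (fun p => by show ((va p).1 : ℕ) ≤ Lv; have h1 := (va p).2; have h2 := hTlast; omega)
  set va' : Fin j → (Gap1 k).Carrier :=
    fun p => ⟨a' p, by have h1 := ha' p; have h2 := hGlast; omega⟩ with hva'def
  unfold Sentence.Realize Formula.Realize
  rw [realize_exN_iff]
  refine ⟨va', ?_⟩
  rw [realize_allN_iff]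
  intro vb'
  obtain ⟨b, hb, hPat⟩ := hcont (fun p => (vb' p).1)
    (fun p => by show ((vb' p).1 : ℕ) ≤ Lv; have h1 := (vb' p).2; have h2 := hGlast; omega)
  set vb : Fin j' → (Tot1 k).Carrier :=
    fun p => ⟨b p, by have h1 := hb p; have h2 := hTlast; omega⟩ with hvbdef
  have hreal := hva vb
  -- index decomposition
  set vT : Fin (0 + j + j') → (Tot1 k).Carrier :=
    Fin.append (Fin.append (default : Fin 0 → (Tot1 k).Carrier) va) vb with hvT
  set vG : Fin (0 + j + j') → (Gap1 k).Carrier :=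
    Fin.append (Fin.append (default : Fin 0 → (Gap1 k).Carrier) va') vb' with hvG
  have hdec : ∀ i : Fin (0 + j + j'), ∃ pp : Fin j ⊕ Fin j',
      (vT i).1 = Sum.elim (fun p => ((va p).1 : ℕ)) b pp ∧
      (vG i).1 = Sum.elim a' (fun p => ((vb' p).1 : ℕ)) pp := by
    intro i
    refine Fin.addCases (fun i0 => ?_) (fun i1 => ?_) i
    · refine Fin.addCases (fun e => e.elim0) (fun p => ?_) i0
      refine ⟨Sum.inl p, ?_, ?_⟩
      · simp only [hvT, Fin.append_left, Fin.append_right]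
        rfl
      · simp only [hvG, Fin.append_left, Fin.append_right]
        rfl
    · refine ⟨Sum.inr i1, ?_, ?_⟩
      · simp only [hvT, Fin.append_right]
        rfl
      · simp only [hvG, Fin.append_right]
        rfl
  have heq : ∀ p q : Fin (0 + j + j'), vT p = vT q ↔ vG p = vG q := by
    intro p q
    obtain ⟨pp, hp1, hp2⟩ := hdec p
    obtain ⟨qq, hq1, hq2⟩ := hdec q
    have h1 := (hPat pp qq).1
    have h2 := (hPat qq pp).1
    rw [Fin.ext_iff, Fin.ext_iff, hp1, hp2, hq1, hq2]
    omega
  have hrel : ∀ (m : ℕ) (R : (sig 1).Relations m) (ts : Fin m → Fin (0 + j + j')),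
      (Structure.RelMap R (fun i => vT (ts i)) ↔ Structure.RelMap R (fun i => vG (ts i))) := by
    intro m R ts
    match m, R with
    | 0, R => exact (R : Empty).elim
    | 1, R =>
      obtain ⟨iv, h2, h3⟩ := R
      omega
    | (n+3), R => exact (R : Empty).elim
    | 2, Sum.inr R =>
      obtain ⟨⟨iv, h2, h3⟩, bb⟩ := R
      omega
    | 2, Sum.inl R =>
      obtain ⟨p0, hP0, hP0'⟩ := hdec (ts 0)
      obtain ⟨p1, hP1, hP1'⟩ := hdec (ts 1)
      have hpp := hPat p0 p1
      have hpr := hPat p1 p0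
      fin_cases R
      · -- ≤
        show (vT (ts 0) ≤ vT (ts 1)) ↔ (vG (ts 0) ≤ vG (ts 1))
        rw [Fin.le_def, Fin.le_def, hP0, hP1, hP0', hP1']
        exact hpp.1
      · -- S
        show ((vT (ts 1)).1 = (vT (ts 0)).1 + 1) ↔
          ((vG (ts 1)).1 = (vG (ts 0)).1 + 1 ∧ (vG (ts 1)).1 ≠ 3*(k+2)^2)
        rw [hP0, hP1, hP0', hP1']
        exact hpp.2.1
      · -- R
        show ((vT (ts 0)).1 = 0 ∧ (vT (ts 1)).1 = 6*(k+2)^2 - 1) ↔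
          ((vG (ts 0)).1 = 0 ∧ (vG (ts 1)).1 = 6*(k+2)^2 - 1)
        rw [hP0, hP1, hP0', hP1']
        constructor
        · rintro ⟨u1, u2⟩
          exact ⟨(hpp.2.2.1).1 u1, ((hPat p1 p0).2.2.2).1 u2⟩
        · rintro ⟨u1, u2⟩
          exact ⟨(hpp.2.2.1).2 u1, ((hPat p1 p0).2.2.2).2 u2⟩
  exact (qf_transfer sig1_fun_empty hθ _ _ vT vG hrel heq).mp hreal

end Bridge

/-- `Tot_{1,k} ⇛_{2,k} Gap_{1,k}`. -/
theorem statement_14 (k : ℕ) (hk : 1 ≤ k) :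
    @SigImp (sig 1) 2 k (Tot1 k).Carrier (Gap1 k).Carrier
      (strOfN 1 (Tot1 k)) (strOfN 1 (Gap1 k)) := by
  intro φ hφ hTot
  have hφ2 : IsSigmaPi k false 1 0 φ ∨
      ∃ j : ℕ, j ≤ k ∧ ∃ ψ : (sig 1).BoundedFormula Empty (0 + j),
        IsSigmaPi k false 1 (0 + j) ψ ∧ φ = exN j ψ := hφ
  rcases hφ2 with h1 | ⟨j, hjk, ψ, hψ, rfl⟩
  · have h2 : φ.IsQF ∨
        ∃ j : ℕ, j ≤ k ∧ ∃ ψ : (sig 1).BoundedFormula Empty (0 + j),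
          ψ.IsQF ∧ φ = allN j ψ := h1
    rcases h2 with hqf | ⟨j, hjk, ψ, hψqf, rfl⟩
    · exact master k hk 0 0 (by omega) (by omega) φ hqf hTot
    · exact master k hk 0 j (by omega) hjk ψ hψqf hTot
  · have h2 : ψ.IsQF ∨
        ∃ j' : ℕ, j' ≤ k ∧ ∃ θ : (sig 1).BoundedFormula Empty ((0 + j) + j'),
          θ.IsQF ∧ ψ = allN j' θ := hψ
    rcases h2 with hqf | ⟨j', hj'k, θ, hθqf, rfl⟩
    · exact master k hk j 0 hjk (by omega) ψ hqf hTot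
    · exact master k hk j j' hjk hj'k θ hθqf hTot


end Paper
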